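/- arXiv:0809.2970 — 2 statements merged into one kernel-verified Lean document; each statement's English description precedes it below -/
import Mathlib

section
/- If u, v ∈ W_i belong to the same set W_i, then δ_G(u,v) = min { δ_i(u,v) , min_{z ∈ T} ( δ_G(u,z) + δ_G(z,v) ) }. -/
/-- A directed graph on vertex type `V` with integer edge lengths. -/
structure Digraph' (V : Type) where
  Adj : V → V → Prop
  len : V → V → ℤ

namespace Digraph'

variable {V : Type}

/-- Directed walks in `G` from `u` to `v`. -/
inductive Walk (G : Digraph' V) : V → V → Type where
  | nil {u : V} : Walk G u u
  | cons {u v w : V} (h : G.Adj u v) (p : Walk G v w) : Walk G u w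

/-- The total length (weight) of a walk: the sum of the lengths of its edges. -/
def Walk.weight {G : Digraph' V} : {u v : V} → G.Walk u v → ℤ
  | _, _, .nil => 0
  | u, _, .cons (v := x) _ p => G.len u x + Walk.weight p

/-- The list of vertices visited by a walk. -/
def Walk.support {G : Digraph' V} : {u v : V} → G.Walk u v → List V
  | u, _, .nil => [u]
  | u, _, .cons _ p => u :: Walk.support p

/-- The number of edges of a walk. -/
def Walk.edgeCount {G : Digraph' V} : {u v : V} → G.Walk u v → ℕ
  | _, _, .nil => 0
  | _, _, .cons _ p => Walk.edgeCount p + 1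

/-- The distance from `u` to `v`: the infimum of the total lengths of directed walks
from `u` to `v` (`⊤` if there is no such walk). -/
noncomputable def dist (G : Digraph' V) (u v : V) : EReal :=
  ⨅ p : G.Walk u v, ((Walk.weight p : ℝ) : EReal)

/-- The subgraph of `G` induced by a set `S` of vertices. -/
def induce (G : Digraph' V) (S : Set V) : Digraph' V where
  Adj a b := G.Adj a b ∧ a ∈ S ∧ b ∈ S
  len := G.len

end Digraph'

/-!
A walk from `u` to `v` that stays inside `V_i` is a walk of `G_i`. A walk that leaves `V_i`
makes its first step out of `V_i` along an edge lying in some `V_j` with `j ≠ i`, so that step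
starts in `V_i ∩ V_j = T`; splitting the walk there bounds its weight below by
`δ_G(u,z) + δ_G(z,v)`. The reverse inequality is the triangle inequality, which needs care in
`EReal` because `⊥ + ⊤ = ⊥`: without negative cycles every walk weighs at least as much as a
simple walk, so on a finite graph distances are bounded below and, when finite, attained.
-/

namespace Digraph'

variable {V : Type} {G : Digraph' V}

def NoNegativeCycles (G : Digraph' V) : Prop :=
  ∀ (x : V) (p : G.Walk x x), 0 ≤ p.weight

namespace Walk

def append : {u v w : V} → G.Walk u v → G.Walk v w → G.Walk u w
  | _, _, _, .nil, q => q
  | _, _, _, .cons h p, q => .cons h (p.append q)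

lemma weight_append {u v w : V} (p : G.Walk u v) (q : G.Walk v w) :
    (p.append q).weight = p.weight + q.weight := by
  induction p with
  | nil => simp [append, weight]
  | cons h p ih => simp only [append, weight, ih]; ring

lemma start_mem_support {u v : V} (p : G.Walk u v) : u ∈ p.support := by
  cases p <;> simp [support]

lemma length_support {u v : V} (p : G.Walk u v) : p.support.length = p.edgeCount + 1 := by
  induction p with
  | nil => rfl
  | cons h p ih => simp [support, edgeCount, ih]

lemma exists_split_of_mem_support {x y t : V} (p : G.Walk x y) (ht : t ∈ p.support) :
    ∃ (q : G.Walk x t) (r : G.Walk t y),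
      p.weight = q.weight + r.weight ∧ r.support.Sublist p.support := by
  induction p with
  | nil =>
    obtain rfl : t = _ := by simpa [support] using ht
    exact ⟨.nil, .nil, by simp [weight], .refl _⟩
  | @cons a b c h p ih =>
    rcases eq_or_ne t a with rfl | hne
    · exact ⟨.nil, .cons h p, by simp [weight], .refl _⟩
    · obtain ⟨q, r, hw, hs⟩ := ih (by simpa [support, hne] using ht)
      exact ⟨.cons h q, r, by simp only [weight, hw]; ring, hs.cons a⟩

lemma exists_nodup_weight_le (hG : G.NoNegativeCycles) {x y : V} (p : G.Walk x y) :
    ∃ q : G.Walk x y, q.weight ≤ p.weight ∧ q.support.Nodup := by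
  induction p with
  | nil => exact ⟨.nil, le_rfl, by simp [support]⟩
  | @cons a b c h p ih =>
    obtain ⟨q, hqw, hqn⟩ := ih
    by_cases ha : a ∈ q.support
    · -- `cons h q₁` is a cycle at `a`, so dropping it does not increase the weight
      obtain ⟨q₁, q₂, hw, hs⟩ := exists_split_of_mem_support q ha
      have hcycle : 0 ≤ G.len a b + q₁.weight := hG a (.cons h q₁)
      exact ⟨q₂, by simp only [weight]; omega, hs.nodup hqn⟩
    · exact ⟨.cons h q, by simp only [weight]; omega, by simpa [support, ha] using hqn⟩

lemma edgeCount_mul_le_weight {m : ℤ} (hm : ∀ a b, G.Adj a b → m ≤ G.len a b) {x y : V}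
    (p : G.Walk x y) : p.edgeCount * m ≤ p.weight := by
  induction p with
  | nil => simp [weight, edgeCount]
  | @cons a b c h p ih =>
    simp only [weight, edgeCount]
    push_cast
    linarith [hm a b h]

def ofInduce {S : Set V} : {x y : V} → (G.induce S).Walk x y → G.Walk x y
  | _, _, .nil => .nil
  | _, _, .cons h p => .cons h.1 p.ofInduce

lemma weight_ofInduce {S : Set V} {x y : V} (p : (G.induce S).Walk x y) :
    p.ofInduce.weight = p.weight := by
  induction p with
  | nil => rfl
  | cons h p ih => simp only [ofInduce, weight, ih]; rfl

lemma exists_induce_of_support_subset {S : Set V} {x y : V} (p : G.Walk x y)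
    (hp : ∀ w ∈ p.support, w ∈ S) : ∃ q : (G.induce S).Walk x y, q.weight = p.weight := by
  induction p with
  | nil => exact ⟨.nil, rfl⟩
  | @cons a b c h p ih =>
    have ha : a ∈ S := hp a (by simp [support])
    have hb : b ∈ S := hp b (by simp [support, start_mem_support p])
    obtain ⟨q, hq⟩ := ih fun w hw => hp w (by simp [support, hw])
    exact ⟨.cons ⟨h, ha, hb⟩ q, by simp only [weight, hq]; rfl⟩

end Walk

lemma exists_le_weight [Finite V] (hG : G.NoNegativeCycles) :
    ∃ C : ℤ, ∀ (x y : V) (p : G.Walk x y), C ≤ p.weight := by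
  have := Fintype.ofFinite V
  obtain ⟨m, hm⟩ := Finite.bddBelow_range fun e : V × V => G.len e.1 e.2
  have hm' : ∀ a b, G.Adj a b → min m 0 ≤ G.len a b :=
    fun a b _ => (min_le_left _ _).trans (hm ⟨(a, b), rfl⟩)
  refine ⟨Fintype.card V * min m 0, fun x y p => ?_⟩
  obtain ⟨q, hqw, hqn⟩ := p.exists_nodup_weight_le hG
  have hcount : q.edgeCount ≤ Fintype.card V := by
    have := hqn.length_le_card
    rw [q.length_support] at this
    omega
  calc (Fintype.card V : ℤ) * min m 0 ≤ q.edgeCount * min m 0 :=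
        mul_le_mul_of_nonpos_right (by exact_mod_cast hcount) (min_le_right _ _)
    _ ≤ q.weight := q.edgeCount_mul_le_weight hm'
    _ ≤ p.weight := hqw

lemma dist_le_weight {x y : V} (p : G.Walk x y) : G.dist x y ≤ ((p.weight : ℝ) : EReal) :=
  iInf_le _ p

lemma dist_eq_top_of_isEmpty {x y : V} (h : IsEmpty (G.Walk x y)) : G.dist x y = ⊤ := by
  simp [dist]

lemma dist_ne_bot [Finite V] (hG : G.NoNegativeCycles) (x y : V) : G.dist x y ≠ ⊥ := by
  obtain ⟨C, hC⟩ := exists_le_weight hG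
  have : ((C : ℝ) : EReal) ≤ G.dist x y := le_iInf fun p => by exact_mod_cast hC x y p
  exact ne_bot_of_le_ne_bot (EReal.coe_ne_bot _) this

lemma exists_dist_eq_weight [Finite V] (hG : G.NoNegativeCycles) {x y : V}
    (h : Nonempty (G.Walk x y)) : ∃ p : G.Walk x y, G.dist x y = ((p.weight : ℝ) : EReal) := by
  obtain ⟨C, hC⟩ := exists_le_weight hG
  obtain ⟨w, ⟨p, rfl⟩, hmin⟩ := Int.exists_least_of_bdd
    (P := fun w => ∃ p : G.Walk x y, p.weight = w)
    ⟨C, fun _ ⟨p, hp⟩ => hp ▸ hC x y p⟩ ⟨_, h.some, rfl⟩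
  refine ⟨p, le_antisymm (dist_le_weight p) (le_iInf fun q => ?_)⟩
  exact_mod_cast hmin _ ⟨q, rfl⟩

lemma dist_triangle [Finite V] (hG : G.NoNegativeCycles) (x y z : V) :
    G.dist x z ≤ G.dist x y + G.dist y z := by
  rcases isEmpty_or_nonempty (G.Walk x y) with hxy | hxy
  · rw [dist_eq_top_of_isEmpty hxy, EReal.top_add_of_ne_bot (dist_ne_bot hG y z)]
    exact le_top
  rcases isEmpty_or_nonempty (G.Walk y z) with hyz | hyz
  · rw [dist_eq_top_of_isEmpty hyz, EReal.add_top_of_ne_bot (dist_ne_bot hG x y)]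
    exact le_top
  obtain ⟨p, hp⟩ := exists_dist_eq_weight hG hxy
  obtain ⟨q, hq⟩ := exists_dist_eq_weight hG hyz
  calc G.dist x z ≤ (((p.append q).weight : ℝ) : EReal) := dist_le_weight _
    _ = G.dist x y + G.dist y z := by rw [hp, hq, Walk.weight_append]; push_cast; rfl

lemma dist_add_dist_le_weight {x y z : V} (p : G.Walk x y) (hz : z ∈ p.support) :
    G.dist x z + G.dist z y ≤ ((p.weight : ℝ) : EReal) := by
  obtain ⟨q, r, hw, -⟩ := p.exists_split_of_mem_support hz
  calc G.dist x z + G.dist z y ≤ ((q.weight : ℝ) : EReal) + ((r.weight : ℝ) : EReal) :=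
        add_le_add (dist_le_weight q) (dist_le_weight r)
    _ = ((p.weight : ℝ) : EReal) := by rw [hw]; push_cast; rfl

lemma dist_le_dist_induce (S : Set V) (x y : V) : G.dist x y ≤ (G.induce S).dist x y :=
  le_iInf fun p => p.weight_ofInduce ▸ dist_le_weight p.ofInduce

lemma Walk.exists_mem_support_of_not_forall_mem {k : ℕ} {Vs : Fin k → Set V} {T : Set V}
    {i : Fin k} (hdelta : ∀ j, j ≠ i → Vs i ∩ Vs j ⊆ T)
    (hedge : ∀ a b, G.Adj a b → ∃ j, a ∈ Vs j ∧ b ∈ Vs j) {x y : V} (p : G.Walk x y)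
    (hx : x ∈ Vs i) (hleave : ¬ ∀ w ∈ p.support, w ∈ Vs i) :
    ∃ z ∈ T, z ∈ p.support := by
  push Not at hleave
  induction p with
  | nil =>
    obtain ⟨w, hw, hwi⟩ := hleave
    obtain rfl : w = _ := by simpa [support] using hw
    exact absurd hx hwi
  | @cons a b c h p ih =>
    obtain ⟨j, haj, hbj⟩ := hedge a b h
    by_cases hb : b ∈ Vs i
    · obtain ⟨w, hw, hwi⟩ := hleave
      have hw' : w ∈ p.support := by
        rcases List.mem_cons.mp hw with rfl | hw
        · exact absurd hx hwi
        · exact hw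
      obtain ⟨z, hz, hzp⟩ := ih hb ⟨w, hw', hwi⟩
      exact ⟨z, hz, List.mem_cons_of_mem a hzp⟩
    · have hji : j ≠ i := fun hji => hb (hji ▸ hbj)
      exact ⟨a, hdelta j hji ⟨hx, haj⟩, List.mem_cons_self⟩

end Digraph'

theorem stmt5_general {V : Type} [Fintype V] (G : Digraph' V)
    (hnoneg : ∀ (x : V) (p : G.Walk x x), 0 ≤ p.weight)
    (k : ℕ) (Vs : Fin k → Set V)
    (T : Set V) (hdelta : ∀ i j : Fin k, i ≠ j → Vs i ∩ Vs j = T)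
    (hedge : ∀ u v : V, G.Adj u v → ∃ i, u ∈ Vs i ∧ v ∈ Vs i)
    (i : Fin k) (u v : V) (hu : u ∈ Vs i \ T) :
    G.dist u v =
      min ((G.induce (Vs i)).dist u v) (⨅ z ∈ T, (G.dist u z + G.dist z v)) := by
  refine le_antisymm (le_min (Digraph'.dist_le_dist_induce _ u v)
    (le_iInf₂ fun z _ => Digraph'.dist_triangle hnoneg u z v)) (le_iInf fun p => ?_)
  by_cases hstay : ∀ w ∈ p.support, w ∈ Vs i
  · obtain ⟨q, hq⟩ := p.exists_induce_of_support_subset hstay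
    exact (min_le_left _ _).trans (hq ▸ Digraph'.dist_le_weight q)
  · obtain ⟨z, hzT, hzp⟩ := p.exists_mem_support_of_not_forall_mem
      (fun j hj => (hdelta i j hj.symm).le) hedge hu.1 hstay
    exact (min_le_right _ _).trans
      ((iInf₂_le z hzT).trans (Digraph'.dist_add_dist_le_weight p hzp))

/-- If `u, v ∈ W_i` belong to the same set `W_i`, then
`δ_G(u,v) = min { δ_i(u,v) , min_{z ∈ T} ( δ_G(u,z) + δ_G(z,v) ) }`. -/
theorem stmt5 {V : Type} [Fintype V] (G : Digraph' V)
    (hnoneg : ∀ (x : V) (p : G.Walk x x), 0 ≤ p.weight)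
    (k : ℕ) (hk : 2 ≤ k) (Vs : Fin k → Set V)
    (hcover : (⋃ i, Vs i) = Set.univ)
    (T : Set V) (hdelta : ∀ i j : Fin k, i ≠ j → Vs i ∩ Vs j = T)
    (hedge : ∀ u v : V, G.Adj u v → ∃ i, u ∈ Vs i ∧ v ∈ Vs i)
    (i : Fin k) (u v : V) (hu : u ∈ Vs i \ T) (hv : v ∈ Vs i \ T) :
    G.dist u v =
      min ((G.induce (Vs i)).dist u v) (⨅ z ∈ T, (G.dist u z + G.dist z v)) :=
  stmt5_general G hnoneg k Vs T hdelta hedge i u v hu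
end

section
/- For all boundary vertices u, v ∈ B, the distance from u to v in the replaced graph G' equals the distance from u to v in G: δ_{G'}(u,v) = δ_G(u,v). -/
namespace Digraph'

variable {V : Type}

/-- The region induced by a set `F` of (directed) edges: all vertices incident with an
edge of `F`. -/
def region (F : Set (V × V)) : Set V :=
  {x : V | ∃ p ∈ F, x = p.1 ∨ x = p.2}

/-- The boundary vertices of the `j`-th region of an edge partition `F`: vertices of the
`j`-th region that also belong to some other region. -/
def boundary {m : ℕ} (F : Fin m → Set (V × V)) (j : Fin m) : Set V :=
  region (F j) ∩ {x : V | ∃ j', j' ≠ j ∧ x ∈ region (F j')}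

/-- The directed graph with the same vertices as `G` whose edges are the pairs in `F`
(with lengths inherited from `G`). -/
def partGraph (G : Digraph' V) (F : Set (V × V)) : Digraph' V where
  Adj a b := (a, b) ∈ F
  len := G.len

end Digraph'


namespace Digraph'

variable {V : Type}

/-- Concatenation of walks. -/
def Walk.append_s10 {G : Digraph' V} : {u v w : V} → G.Walk u v → G.Walk v w → G.Walk u w
  | _, _, _, .nil, q => q
  | _, _, _, .cons h p, q => .cons h (Walk.append_s10 p q)

lemma Walk.weight_append_s10 {G : Digraph' V} {u v w : V} (p : G.Walk u v) (q : G.Walk v w) :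
    (p.append_s10 q).weight = p.weight + q.weight := by
  induction p with
  | nil => simp [Walk.append_s10, Walk.weight]
  | cons h p ih => simp [Walk.append_s10, Walk.weight, ih]; ring

/-- Transferring a walk to a graph with more edges. -/
def Walk.transfer {G H : Digraph' V} (hAdj : ∀ a b, G.Adj a b → H.Adj a b) :
    {u v : V} → G.Walk u v → H.Walk u v
  | _, _, .nil => .nil
  | _, _, .cons h p => .cons (hAdj _ _ h) (Walk.transfer hAdj p)

lemma Walk.weight_transfer {G H : Digraph' V} (hAdj : ∀ a b, G.Adj a b → H.Adj a b)
    (hl : ∀ a b, H.len a b = G.len a b) {u v : V} (p : G.Walk u v) :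
    (Walk.transfer hAdj p).weight = p.weight := by
  induction p with
  | nil => rfl
  | cons h p ih => simp [Walk.transfer, Walk.weight, ih, hl]

lemma mem_region_fst {F : Set (V × V)} {a b : V} (h : (a, b) ∈ F) : a ∈ region F :=
  ⟨(a, b), h, Or.inl rfl⟩

lemma mem_region_snd {F : Set (V × V)} {a b : V} (h : (a, b) ∈ F) : b ∈ region F :=
  ⟨(a, b), h, Or.inr rfl⟩

lemma mem_boundary_of {m : ℕ} {F : Fin m → Set (V × V)} {x : V} {j : Fin m}
    (hx : x ∈ region (F j)) (h : ∃ j₀, x ∈ boundary F j₀) : x ∈ boundary F j := by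
  obtain ⟨j₀, hr₀, j₁, hne, hr₁⟩ := h
  refine ⟨hx, ?_⟩
  by_cases hjj : j₀ = j
  · exact ⟨j₁, by rw [← hjj]; exact hne, hr₁⟩
  · exact ⟨j₀, hjj, hr₀⟩

lemma splitFirst {m : ℕ} (G : Digraph' V) (F : Fin m → Set (V × V))
    (hcover : (⋃ j, F j) = {p : V × V | G.Adj p.1 p.2}) (j : Fin m) {v : V} :
    ∀ {x : V} (p : G.Walk x v) (a : V), (a, x) ∈ F j →
    ∃ (w : V) (p1 : (G.partGraph (F j)).Walk a w) (p2 : G.Walk w v),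
      p1.weight + p2.weight = G.len a x + p.weight ∧
      p2.edgeCount ≤ p.edgeCount ∧
      w ∈ region (F j) ∧
      ((∃ j', j' ≠ j ∧ w ∈ region (F j')) ∨ w = v) := by
  intro x p
  induction p with
  | nil =>
    intro a hax
    refine ⟨_, .cons hax .nil, .nil, ?_, le_refl _, mem_region_snd hax, Or.inr rfl⟩
    simp [Walk.weight, partGraph]
  | @cons x y _ h p ih =>
    intro a hax
    by_cases hxy : (x, y) ∈ F j
    · obtain ⟨w, p1, p2, hw, hc, hr, hd⟩ := ih x hxy
      refine ⟨w, .cons hax p1, p2, ?_, ?_, hr, hd⟩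
      · simp only [Walk.weight, partGraph] at *
        linarith
      · simp only [Walk.edgeCount]; omega
    · have hmem : (x, y) ∈ ⋃ j', F j' := by rw [hcover]; exact h
      obtain ⟨j', hj'⟩ := Set.mem_iUnion.1 hmem
      have hne : j' ≠ j := fun e => hxy (e ▸ hj')
      refine ⟨x, .cons hax .nil, .cons h p, ?_, le_refl _, mem_region_snd hax,
        Or.inl ⟨j', hne, mem_region_fst hj'⟩⟩
      simp [Walk.weight, partGraph]

end Digraph'

/-- Let `E(G)` be partitioned into parts `F 1, …, F m` with regions
`R j` and boundary-vertex sets `B j`, and let `G'` (the replaced graph) be the directed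
graph on the set `B` of boundary vertices that has, for each `j` and each ordered pair of
distinct vertices `u, v ∈ B j`, an edge `(u,v)` of length `δ_j(u,v)` (edges of infinite
length omitted, and parallel edges replaced by the minimum).  Then for all boundary
vertices `u, v ∈ B`, `δ_{G'}(u,v) = δ_G(u,v)`. -/
theorem stmt10 {V : Type} [Fintype V] (G : Digraph' V)
    (hnoneg : ∀ (x : V) (p : G.Walk x x), 0 ≤ p.weight)
    (m : ℕ) (F : Fin m → Set (V × V))
    (hcover : (⋃ j, F j) = {p : V × V | G.Adj p.1 p.2})
    (hdisj : Pairwise fun a b => Disjoint (F a) (F b))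
    (G' : Digraph' V)
    (hadj : ∀ u v : V, G'.Adj u v ↔
      u ≠ v ∧ (∃ j, u ∈ Digraph'.boundary F j ∧ v ∈ Digraph'.boundary F j) ∧
      (⨅ j ∈ {j : Fin m | u ∈ Digraph'.boundary F j ∧ v ∈ Digraph'.boundary F j},
        (G.partGraph (F j)).dist u v) ≠ ⊤)
    (hlen : ∀ u v : V, G'.Adj u v →
      ((G'.len u v : ℝ) : EReal) =
      ⨅ j ∈ {j : Fin m | u ∈ Digraph'.boundary F j ∧ v ∈ Digraph'.boundary F j},
        (G.partGraph (F j)).dist u v)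
    (u v : V)
    (hu : ∃ j, u ∈ Digraph'.boundary F j) (hv : ∃ j, v ∈ Digraph'.boundary F j) :
    G'.dist u v = G.dist u v := by
  classical
  have hsubAdj : ∀ (j : Fin m) (a b : V), (G.partGraph (F j)).Adj a b → G.Adj a b := by
    intro j a b hab
    have hm : (a, b) ∈ ⋃ j', F j' := Set.mem_iUnion.2 ⟨j, hab⟩
    rw [hcover] at hm
    exact hm
  have key : ∀ (n : ℕ) (u' : V) (p : G.Walk u' v), p.edgeCount ≤ n →
      (∃ j, u' ∈ Digraph'.boundary F j) → ∃ q : G'.Walk u' v, q.weight ≤ p.weight := by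
    intro n
    induction n with
    | zero =>
      intro u' p hle _
      cases p with
      | nil => exact ⟨.nil, le_refl _⟩
      | cons h p' => simp [Digraph'.Walk.edgeCount] at hle
    | succ n ih =>
      intro u' p hle hu'
      cases p with
      | nil => exact ⟨.nil, le_refl _⟩
      | @cons _ x _ h p' =>
        have hmem : (u', x) ∈ ⋃ j', F j' := by rw [hcover]; exact h
        obtain ⟨j, hax⟩ := Set.mem_iUnion.1 hmem
        obtain ⟨w, p1, p2, hw, hc, hr, hd⟩ := Digraph'.splitFirst G F hcover j p' u' hax
        have hwB : w ∈ Digraph'.boundary F j := by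
          rcases hd with ⟨j', hne, hr'⟩ | rfl
          · exact ⟨hr, j', hne, hr'⟩
          · exact Digraph'.mem_boundary_of hr hv
        have hc2 : p2.edgeCount ≤ n := by
          simp only [Digraph'.Walk.edgeCount] at hle
          omega
        obtain ⟨q2, hq2⟩ := ih w p2 hc2 ⟨j, hwB⟩
        by_cases huw : u' = w
        · subst huw
          have h0 : 0 ≤ p1.weight := by
            have h1 := hnoneg _ (p1.transfer (hsubAdj j))
            rwa [Digraph'.Walk.weight_transfer (hsubAdj j) (fun _ _ => rfl)] at h1
          refine ⟨q2, ?_⟩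
          simp only [Digraph'.Walk.weight]
          linarith
        · have huB : u' ∈ Digraph'.boundary F j :=
            Digraph'.mem_boundary_of (Digraph'.mem_region_fst hax) hu'
          have hjS : j ∈ {j : Fin m |
              u' ∈ Digraph'.boundary F j ∧ w ∈ Digraph'.boundary F j} := ⟨huB, hwB⟩
          have hdle : (G.partGraph (F j)).dist u' w ≤ ((p1.weight : ℝ) : EReal) :=
            iInf_le _ p1
          have hile : (⨅ j' ∈ {j' : Fin m |
                u' ∈ Digraph'.boundary F j' ∧ w ∈ Digraph'.boundary F j'},
              (G.partGraph (F j')).dist u' w) ≤ ((p1.weight : ℝ) : EReal) :=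
            le_trans (iInf₂_le j hjS) hdle
          have hAdj' : G'.Adj u' w := by
            rw [hadj]
            exact ⟨huw, ⟨j, huB, hwB⟩, (lt_of_le_of_lt hile (EReal.coe_lt_top _)).ne⟩
          have hlw : G'.len u' w ≤ p1.weight := by
            have h2 := (hlen u' w hAdj').le.trans hile
            exact_mod_cast h2
          refine ⟨.cons hAdj' q2, ?_⟩
          simp only [Digraph'.Walk.weight]
          linarith
  have key2 : ∀ (u' : V) (q : G'.Walk u' v), ∃ p : G.Walk u' v, p.weight ≤ q.weight := by
    clear key hv hu
    intro u' q
    induction q with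
    | nil => exact ⟨.nil, le_refl _⟩
    | @cons a b _ hA q' ih =>
      obtain ⟨p', hp'⟩ := ih
      have hl := hlen _ _ hA
      have hlt : (⨅ j ∈ {j : Fin m |
            a ∈ Digraph'.boundary F j ∧ b ∈ Digraph'.boundary F j},
          (G.partGraph (F j)).dist a b) < (((G'.len a b + 1 : ℤ) : ℝ) : EReal) := by
        rw [← hl]
        have h3 : (G'.len a b : ℝ) < ((G'.len a b + 1 : ℤ) : ℝ) := by push_cast; linarith
        exact_mod_cast h3
      simp only [iInf_lt_iff] at hlt
      obtain ⟨j, hjS, hdlt⟩ := hlt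
      simp only [Digraph'.dist] at hdlt
      rw [iInf_lt_iff] at hdlt
      obtain ⟨r, hrlt⟩ := hdlt
      have hrw : r.weight ≤ G'.len a b := by
        have h4 : (r.weight : ℝ) < ((G'.len a b + 1 : ℤ) : ℝ) := by exact_mod_cast hrlt
        have h5 : r.weight < G'.len a b + 1 := by exact_mod_cast h4
        omega
      refine ⟨(r.transfer (hsubAdj j)).append_s10 p', ?_⟩
      rw [Digraph'.Walk.weight_append_s10,
        Digraph'.Walk.weight_transfer (hsubAdj j) (fun _ _ => rfl)]
      simp only [Digraph'.Walk.weight]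
      linarith
  refine le_antisymm ?_ ?_
  · simp only [Digraph'.dist]
    refine le_iInf fun p => ?_
    obtain ⟨q, hq⟩ := key p.edgeCount u p (le_refl _) hu
    refine le_trans (iInf_le _ q) ?_
    exact_mod_cast hq
  · simp only [Digraph'.dist]
    refine le_iInf fun q => ?_
    obtain ⟨p, hp⟩ := key2 u q
    refine le_trans (iInf_le _ p) ?_
    exact_mod_cast hp
end
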